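/- arXiv:2507.06772 — 2 statements merged into one kernel-verified Lean document; each statement's English description precedes it below -/
import Mathlib

section
/- Under the hypotheses of the Frobenius-norm Jacobian model error bound — namely: F : ℝⁿ → ℝᵐ differentiable with Jacobian J, each ∇F⁽ⁱ⁾ κ_lg-Lipschitz and s-sparse at x; σ > 0; v¹, …, v^p ∈ ℝⁿ with ‖vʲ‖ ≤ κ_bv; A ∈ ℝ^{p×n} with rows (vʲ)ᵀ having the s-sparse ℓ1-recovery property with constant c₁ > 0; y⁽ⁱ⁾ ∈ ℝ^p with entries F⁽ⁱ⁾(x + σvʲ) − F⁽ⁱ⁾(x); each g⁽ⁱ⁾ a minimizer of ‖g‖₁ over {g : ‖Ag − σ⁻¹y⁽ⁱ⁾‖ ≤ (√p/2) κ_lg κ_bv² σ}; and J_m the matrix with rows (g⁽ⁱ⁾)ᵀ — suppose in addition that σ ≤ γ₂/θ for some θ > 0 and γ₂ > 0. Then ‖J_m − J(x)‖ ≤ κ_ej/θ in the spectral norm, where κ_ej = (√(mp)/2) c₁ γ₂ κ_lg κ_bv². -/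
open Filter Matrix MeasureTheory

/-- The map `x ↦ A x` from `ℝⁿ` to `ℝᵖ` with the Euclidean (`ℓ²`) structure. -/
noncomputable def mulVecE {p n : ℕ} (A : Matrix (Fin p) (Fin n) ℝ)
    (x : EuclideanSpace ℝ (Fin n)) : EuclideanSpace ℝ (Fin p) :=
  (WithLp.equiv 2 (Fin p → ℝ)).symm (A.mulVec ((WithLp.equiv 2 (Fin n → ℝ)) x))

/-- The spectral norm (ℓ²-operator norm) of a matrix. -/
noncomputable def opNorm {p n : ℕ} (A : Matrix (Fin p) (Fin n) ℝ) : ℝ :=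
  sSup {r : ℝ | ∃ x : EuclideanSpace ℝ (Fin n), ‖x‖ ≤ 1 ∧ r = ‖mulVecE A x‖}

/-- The `i`-th row of a matrix, as a Euclidean vector. -/
noncomputable def rowE {m n : ℕ} (A : Matrix (Fin m) (Fin n) ℝ) (i : Fin m) :
    EuclideanSpace ℝ (Fin n) :=
  (WithLp.equiv 2 (Fin n → ℝ)).symm (A i)

/-- The `ℓ¹` norm on `ℝⁿ`. -/
noncomputable def oneNorm {n : ℕ} (x : EuclideanSpace ℝ (Fin n)) : ℝ :=
  ∑ i, |x i|

/-- `x` is `s`-sparse: it has at most `s` nonzero entries. -/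
def IsSparse {n : ℕ} (s : ℕ) (x : EuclideanSpace ℝ (Fin n)) : Prop :=
  (Finset.univ.filter fun i => x i ≠ 0).card ≤ s

/-- `A` has the `s`-sparse `ℓ¹`-recovery property with constant `c₁`. -/
def RecoveryProperty {p n : ℕ} (s : ℕ) (A : Matrix (Fin p) (Fin n) ℝ)
    (c₁ : ℝ) : Prop :=
  ∀ xhat : EuclideanSpace ℝ (Fin n), IsSparse s xhat →
    ∀ ξ : ℝ, 0 ≤ ξ →
      ∀ y : EuclideanSpace ℝ (Fin p), ‖mulVecE A xhat - y‖ ≤ ξ →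
        ∀ xstar : EuclideanSpace ℝ (Fin n), ‖mulVecE A xstar - y‖ ≤ ξ →
          (∀ x : EuclideanSpace ℝ (Fin n), ‖mulVecE A x - y‖ ≤ ξ →
            oneNorm xstar ≤ oneNorm x) →
          ‖xstar - xhat‖ ≤ c₁ * ξ

/-! Each row `∇F⁽ⁱ⁾(x)` of `J(x)` is `s`-sparse, and by the quadratic bound for functions with
`κ_lg`-Lipschitz gradient it satisfies the `j`-th measurement `⟪vʲ, g⟫ = σ⁻¹ y⁽ⁱ⁾ʲ` up to
`κ_lg κ_bv² σ / 2`. So it is feasible for the `ℓ¹` program with tolerance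
`ξ = (√p/2) κ_lg κ_bv² σ`, and the recovery property puts each row `g⁽ⁱ⁾` of `J_m` within `c₁ ξ`
of it. The spectral norm is at most `√m` times the largest row norm, and `σ ≤ γ₂/θ`. -/

open scoped InnerProductSpace

section Taylor

variable {E F : Type*} [NormedAddCommGroup E] [NormedSpace ℝ E]
  [NormedAddCommGroup F] [NormedSpace ℝ F]

/- Fencing argument on `t ↦ f (x + t • u) - f x - t • f' x u`, whose derivative has norm at
most `κ t ‖u‖²`, the derivative of the barrier `κ/2 t² ‖u‖²`. -/
theorem norm_sub_sub_fderiv_le_of_lipschitz {f : E → F} {f' : E → E →L[ℝ] F}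
    (hf : ∀ z, HasFDerivAt f (f' z) z) {κ : ℝ}
    (hlip : ∀ y z, ‖f' y - f' z‖ ≤ κ * ‖y - z‖) (x u : E) :
    ‖f (x + u) - f x - f' x u‖ ≤ κ / 2 * ‖u‖ ^ 2 := by
  have hφ : ∀ t, HasDerivAt (fun t : ℝ => f (x + t • u) - f x - t • f' x u)
      (f' (x + t • u) u - f' x u) t := by
    intro t
    have hline : HasDerivAt (fun t : ℝ => x + t • u) u t := by
      simpa using ((hasDerivAt_id t).smul_const u).const_add x
    refine ((((hf _).comp_hasDerivAt t hline).sub_const (f x)).sub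
      ((hasDerivAt_id t).smul_const (f' x u))).congr_deriv ?_
    simp
  have hbarrier : ∀ t, HasDerivAt (fun t : ℝ => κ / 2 * t ^ 2 * ‖u‖ ^ 2) (κ * t * ‖u‖ ^ 2) t := by
    intro t
    refine (((hasDerivAt_pow 2 t).const_mul (κ / 2)).mul_const (‖u‖ ^ 2)).congr_deriv ?_
    push_cast
    ring
  have hderiv_le : ∀ t ∈ Set.Ico (0 : ℝ) 1, ‖f' (x + t • u) u - f' x u‖ ≤ κ * t * ‖u‖ ^ 2 := by
    rintro t ⟨ht, -⟩
    calc ‖f' (x + t • u) u - f' x u‖ = ‖(f' (x + t • u) - f' x) u‖ := rfl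
      _ ≤ ‖f' (x + t • u) - f' x‖ * ‖u‖ := ContinuousLinearMap.le_opNorm _ _
      _ ≤ κ * ‖t • u‖ * ‖u‖ := by
        gcongr
        simpa using hlip (x + t • u) x
      _ = κ * t * ‖u‖ ^ 2 := by rw [norm_smul, Real.norm_of_nonneg ht]; ring
  simpa using image_norm_le_of_norm_deriv_right_le_deriv_boundary
    (fun t _ => (hφ t).continuousAt.continuousWithinAt) (fun t _ => (hφ t).hasDerivWithinAt)
    (by simp) hbarrier hderiv_le (Set.right_mem_Icc.2 zero_le_one)

end Taylor

section Gradient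

variable {E : Type*} [NormedAddCommGroup E] [InnerProductSpace ℝ E] [CompleteSpace E]
  {f : E → ℝ} {f' : E → E} {κ : ℝ}

theorem abs_sub_sub_inner_le_of_lipschitz_gradient (hf : ∀ z, HasGradientAt f (f' z) z)
    (hlip : ∀ y z, ‖f' y - f' z‖ ≤ κ * ‖y - z‖) (x u : E) :
    |f (x + u) - f x - ⟪f' x, u⟫_ℝ| ≤ κ / 2 * ‖u‖ ^ 2 := by
  have hlip' : ∀ y z, ‖InnerProductSpace.toDual ℝ E (f' y) - InnerProductSpace.toDual ℝ E (f' z)‖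
      ≤ κ * ‖y - z‖ := fun y z => by
    rw [← map_sub, LinearIsometryEquiv.norm_map]
    exact hlip y z
  simpa using norm_sub_sub_fderiv_le_of_lipschitz (fun z => (hf z).hasFDerivAt) hlip' x u

theorem abs_inner_sub_forwardDiff_le_of_lipschitz_gradient (hf : ∀ z, HasGradientAt f (f' z) z)
    (hlip : ∀ y z, ‖f' y - f' z‖ ≤ κ * ‖y - z‖) {σ : ℝ} (hσ : 0 < σ) (x v : E) :
    |⟪f' x, v⟫_ℝ - σ⁻¹ * (f (x + σ • v) - f x)| ≤ κ / 2 * ‖v‖ ^ 2 * σ := by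
  have hrewrite : ⟪f' x, v⟫_ℝ - σ⁻¹ * (f (x + σ • v) - f x)
      = -σ⁻¹ * (f (x + σ • v) - f x - ⟪f' x, σ • v⟫_ℝ) := by
    rw [real_inner_smul_right]
    field_simp
    ring
  rw [hrewrite, abs_mul, abs_neg, abs_of_pos (inv_pos.2 hσ)]
  calc σ⁻¹ * |f (x + σ • v) - f x - ⟪f' x, σ • v⟫_ℝ| ≤ σ⁻¹ * (κ / 2 * ‖σ • v‖ ^ 2) := by
        gcongr
        exact abs_sub_sub_inner_le_of_lipschitz_gradient hf hlip x (σ • v)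
    _ = κ / 2 * ‖v‖ ^ 2 * σ := by
        rw [norm_smul, Real.norm_of_nonneg hσ.le]
        field_simp

end Gradient

theorem EuclideanSpace.norm_le_sqrt_card_mul {ι : Type*} [Fintype ι] {w : EuclideanSpace ℝ ι}
    {c : ℝ} (hc : 0 ≤ c) (h : ∀ i, |w i| ≤ c) : ‖w‖ ≤ √(Fintype.card ι) * c := by
  rw [EuclideanSpace.norm_eq, ← Real.sqrt_sq hc, ← Real.sqrt_mul (Nat.cast_nonneg _)]
  gcongr
  calc ∑ i, ‖w i‖ ^ 2 ≤ ∑ _i : ι, c ^ 2 := by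
        gcongr with i
        exact (Real.norm_eq_abs _).trans_le (h i)
    _ = Fintype.card ι * c ^ 2 := by simp

section Matrix

variable {m n : ℕ}

theorem rowE_sub (A B : Matrix (Fin m) (Fin n) ℝ) (i : Fin m) :
    rowE (A - B) i = rowE A i - rowE B i := rfl

theorem mulVecE_apply (A : Matrix (Fin m) (Fin n) ℝ) (w : EuclideanSpace ℝ (Fin n)) (i : Fin m) :
    mulVecE A w i = ⟪rowE A i, w⟫_ℝ := by
  simp [mulVecE, rowE, Matrix.mulVec, dotProduct, PiLp.inner_apply, mul_comm]

theorem opNorm_le_sqrt_card_mul {A : Matrix (Fin m) (Fin n) ℝ} {c : ℝ} (hc : 0 ≤ c)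
    (h : ∀ i, ‖rowE A i‖ ≤ c) : opNorm A ≤ √m * c := by
  refine csSup_le ⟨_, 0, by simp, rfl⟩ ?_
  rintro r ⟨w, hw, rfl⟩
  have hentry : ∀ i, |mulVecE A w i| ≤ c := fun i => by
    rw [mulVecE_apply]
    calc |⟪rowE A i, w⟫_ℝ| ≤ ‖rowE A i‖ * ‖w‖ := abs_real_inner_le_norm _ _
      _ ≤ c * 1 := mul_le_mul (h i) hw (norm_nonneg _) hc
      _ = c := mul_one c
  simpa using EuclideanSpace.norm_le_sqrt_card_mul hc hentry

theorem norm_mulVecE_gradient_sub_forwardDiff_le {p : ℕ} {f : EuclideanSpace ℝ (Fin n) → ℝ}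
    {f' : EuclideanSpace ℝ (Fin n) → EuclideanSpace ℝ (Fin n)}
    (hf : ∀ z, HasGradientAt f (f' z) z) {κ : ℝ} (hκ : 0 ≤ κ)
    (hlip : ∀ y z, ‖f' y - f' z‖ ≤ κ * ‖y - z‖) {σ : ℝ} (hσ : 0 < σ)
    {v : Fin p → EuclideanSpace ℝ (Fin n)} {κbv : ℝ} (hv : ∀ j, ‖v j‖ ≤ κbv)
    {A : Matrix (Fin p) (Fin n) ℝ} (hA : ∀ j i, A j i = v j i) (x : EuclideanSpace ℝ (Fin n))
    {y : EuclideanSpace ℝ (Fin p)} (hy : ∀ j, y j = f (x + σ • v j) - f x) :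
    ‖mulVecE A (f' x) - σ⁻¹ • y‖ ≤ √p / 2 * κ * κbv ^ 2 * σ := by
  have hrow : ∀ j, rowE A j = v j := fun j => by ext i; simp [rowE, hA]
  have hentry : ∀ j, |(mulVecE A (f' x) - σ⁻¹ • y) j| ≤ κ / 2 * κbv ^ 2 * σ := by
    intro j
    calc |(mulVecE A (f' x) - σ⁻¹ • y) j|
        = |⟪f' x, v j⟫_ℝ - σ⁻¹ * (f (x + σ • v j) - f x)| := by
          simp [mulVecE_apply, hrow, hy, real_inner_comm]
      _ ≤ κ / 2 * ‖v j‖ ^ 2 * σ :=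
          abs_inner_sub_forwardDiff_le_of_lipschitz_gradient hf hlip hσ x (v j)
      _ ≤ κ / 2 * κbv ^ 2 * σ := by
          gcongr
          exact hv j
  calc ‖mulVecE A (f' x) - σ⁻¹ • y‖ ≤ √(Fintype.card (Fin p)) * (κ / 2 * κbv ^ 2 * σ) :=
        EuclideanSpace.norm_le_sqrt_card_mul (by positivity) hentry
    _ = √p / 2 * κ * κbv ^ 2 * σ := by rw [Fintype.card_fin]; ring

end Matrix

theorem sparse_jacobian_model_first_order_accuracy_general {n m p : ℕ}
    (F : EuclideanSpace ℝ (Fin n) → EuclideanSpace ℝ (Fin m))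
    (J : EuclideanSpace ℝ (Fin n) → Matrix (Fin m) (Fin n) ℝ)
    (hF : ∀ z i, HasGradientAt (fun w => F w i) (rowE (J z) i) z)
    (κlg : ℝ) (hκlg : 0 < κlg)
    (hlip : ∀ i y z, ‖rowE (J y) i - rowE (J z) i‖ ≤ κlg * ‖y - z‖)
    (s : ℕ) (x : EuclideanSpace ℝ (Fin n))
    (hsparse : ∀ i, IsSparse s (rowE (J x) i))
    (σ : ℝ) (hσ : 0 < σ)
    (v : Fin p → EuclideanSpace ℝ (Fin n)) (κbv : ℝ)
    (hv : ∀ j, ‖v j‖ ≤ κbv)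
    (A : Matrix (Fin p) (Fin n) ℝ) (hA : ∀ j i, A j i = v j i)
    (y : Fin m → EuclideanSpace ℝ (Fin p))
    (hy : ∀ i j, y i j = F (x + σ • v j) i - F x i)
    (c₁ : ℝ) (hc₁ : 0 < c₁) (hrec : RecoveryProperty s A c₁)
    (g : Fin m → EuclideanSpace ℝ (Fin n))
    (hfeas : ∀ i, ‖mulVecE A (g i) - σ⁻¹ • y i‖ ≤ (Real.sqrt p / 2) * κlg * κbv ^ 2 * σ)
    (hmin : ∀ i, ∀ g' : EuclideanSpace ℝ (Fin n),
      ‖mulVecE A g' - σ⁻¹ • y i‖ ≤ (Real.sqrt p / 2) * κlg * κbv ^ 2 * σ →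
      oneNorm (g i) ≤ oneNorm g')
    (Jm : Matrix (Fin m) (Fin n) ℝ) (hJm : ∀ i j, Jm i j = g i j)
    (θ γ₂ : ℝ) (hσθ : σ ≤ γ₂ / θ) :
    opNorm (Jm - J x) ≤ (Real.sqrt (m * p) / 2) * c₁ * γ₂ * κlg * κbv ^ 2 / θ := by
  set ξ := Real.sqrt p / 2 * κlg * κbv ^ 2 * σ
  have hrow : ∀ i, ‖rowE (Jm - J x) i‖ ≤ c₁ * ξ := by
    intro i
    have hJm_row : rowE Jm i = g i := by ext k; simp [rowE, hJm]
    rw [rowE_sub, hJm_row]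
    exact hrec _ (hsparse i) ξ (by positivity) _
      (norm_mulVecE_gradient_sub_forwardDiff_le (fun z => hF z i) hκlg.le (hlip i) hσ hv hA x
        (hy i)) (g i) (hfeas i) (hmin i)
  calc opNorm (Jm - J x) ≤ √m * (c₁ * ξ) := opNorm_le_sqrt_card_mul (by positivity) hrow
    _ = √m * √p / 2 * c₁ * κlg * κbv ^ 2 * σ := by ring
    _ ≤ √m * √p / 2 * c₁ * κlg * κbv ^ 2 * (γ₂ / θ) := by gcongr
    _ = Real.sqrt (m * p) / 2 * c₁ * γ₂ * κlg * κbv ^ 2 / θ := by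
      rw [Real.sqrt_mul (Nat.cast_nonneg m)]
      ring

/-- First-order accuracy of the sparse Jacobian model in the spectral norm:
if in addition `σ ≤ γ₂/θ`, then `‖J_m − J(x)‖ ≤ κ_ej/θ` with
`κ_ej = (√(mp)/2) c₁ γ₂ κlg κbv²`. -/
theorem sparse_jacobian_model_first_order_accuracy {n m p : ℕ}
    (F : EuclideanSpace ℝ (Fin n) → EuclideanSpace ℝ (Fin m))
    (J : EuclideanSpace ℝ (Fin n) → Matrix (Fin m) (Fin n) ℝ)
    (hF : ∀ z i, HasGradientAt (fun w => F w i) (rowE (J z) i) z)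
    (κlg : ℝ) (hκlg : 0 < κlg)
    (hlip : ∀ i y z, ‖rowE (J y) i - rowE (J z) i‖ ≤ κlg * ‖y - z‖)
    (s : ℕ) (x : EuclideanSpace ℝ (Fin n))
    (hsparse : ∀ i, IsSparse s (rowE (J x) i))
    (σ : ℝ) (hσ : 0 < σ)
    (v : Fin p → EuclideanSpace ℝ (Fin n)) (κbv : ℝ)
    (hv : ∀ j, ‖v j‖ ≤ κbv)
    (A : Matrix (Fin p) (Fin n) ℝ) (hA : ∀ j i, A j i = v j i)
    (y : Fin m → EuclideanSpace ℝ (Fin p))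
    (hy : ∀ i j, y i j = F (x + σ • v j) i - F x i)
    (c₁ : ℝ) (hc₁ : 0 < c₁) (hrec : RecoveryProperty s A c₁)
    (g : Fin m → EuclideanSpace ℝ (Fin n))
    (hfeas : ∀ i, ‖mulVecE A (g i) - σ⁻¹ • y i‖ ≤ (Real.sqrt p / 2) * κlg * κbv ^ 2 * σ)
    (hmin : ∀ i, ∀ g' : EuclideanSpace ℝ (Fin n),
      ‖mulVecE A g' - σ⁻¹ • y i‖ ≤ (Real.sqrt p / 2) * κlg * κbv ^ 2 * σ →
      oneNorm (g i) ≤ oneNorm g')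
    (Jm : Matrix (Fin m) (Fin n) ℝ) (hJm : ∀ i j, Jm i j = g i j)
    (θ γ₂ : ℝ) (hθ : 0 < θ) (hγ₂ : 0 < γ₂) (hσθ : σ ≤ γ₂ / θ) :
    opNorm (Jm - J x) ≤ (Real.sqrt (m * p) / 2) * c₁ * γ₂ * κlg * κbv ^ 2 / θ :=
  sparse_jacobian_model_first_order_accuracy_general F J hF κlg hκlg hlip s x hsparse σ hσ v κbv hv
    A hA y hy c₁ hc₁ hrec g hfeas hmin Jm hJm θ γ₂ hσθ
end

section
/- Let F : ℝⁿ → ℝᵐ be differentiable with Jacobian J, and suppose ‖J(y) − J(z)‖ ≤ κ_lj‖y − z‖, ‖J(y)‖ ≤ κ_lf and ‖F(y)‖ ≤ κ_bf for all y, z ∈ ℝⁿ. Let x ∈ ℝⁿ, θ > 0, and let J_m ∈ ℝ^{m×n} satisfy ‖J_m‖ ≤ κ_bmj, ‖J_m − J(x)‖ ≤ κ_ej/θ and J_mᵀF(x) ≠ 0. Let d be the LM step for (J_m, F(x), λ) with λ = θ‖J_mᵀF(x)‖, and suppose ‖d‖ ≤ ‖J_mᵀF(x)‖/‖J_mᵀJ_m‖.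 Define ρ = (‖F(x)‖² − ‖F(x + d)‖²)/(‖F(x)‖² − ‖F(x) + J_m d‖²). Then |ρ − 1| ≤ (κ_lj κ_bf + κ_lf² + 2κ_bf κ_ej + κ_bmj²)/(θ‖J_mᵀF(x)‖). -/
open Filter Matrix MeasureTheory

/-- A matrix as a continuous linear map between Euclidean spaces. -/
noncomputable def jacCLM {p n : ℕ} (A : Matrix (Fin p) (Fin n) ℝ) :
    EuclideanSpace ℝ (Fin n) →L[ℝ] EuclideanSpace ℝ (Fin p) :=
  LinearMap.toContinuousLinearMap (Matrix.toEuclideanLin A)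

/-!
Write `u = F x`, `v = J_m d`, `g = J_mᵀ u` and `λ = θ‖g‖`. Pairing the LM equation with `d` gives
`⟪u, v⟫ = -(‖v‖² + λ‖d‖²)`, so the predicted reduction is `‖v‖² + 2λ‖d‖²`. It is at least
`2λ‖d‖²`, and, because `‖d‖ ≤ ‖g‖ / ‖J_m‖²`, also at least `‖g‖‖d‖`. The actual and predicted
reductions differ by `‖F (x + d)‖² - ‖u + v‖²`, which is at most
`2‖u‖‖F (x + d) - u - v‖ + ‖F (x + d) - u‖² + ‖v‖²` in absolute value; the mean value inequality
bounds the model error `F (x + d) - u - v` by `κ_lj‖d‖² + (κ_ej / θ)‖d‖`. Dividing by the two lower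
bounds for the predicted reduction gives the claim.
-/

open scoped RealInnerProductSpace

section Taylor

variable {E G : Type*} [NormedAddCommGroup E] [NormedSpace ℝ E]
  [NormedAddCommGroup G] [NormedSpace ℝ G]
  {F : E → G} {f' : E → E →L[ℝ] G}

theorem norm_sub_le_of_forall_norm_hasFDerivAt_le {C : ℝ}
    (hF : ∀ z, HasFDerivAt F (f' z) z) (hC : ∀ z, ‖f' z‖ ≤ C) (x y : E) :
    ‖F y - F x‖ ≤ C * ‖y - x‖ :=
  convex_univ.norm_image_sub_le_of_norm_hasFDerivWithin_le
    (fun z _ => (hF z).hasFDerivWithinAt) (fun z _ => hC z) (Set.mem_univ x) (Set.mem_univ y)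

theorem norm_sub_sub_apply_le_of_lipschitz {L : ℝ} (hL : 0 ≤ L)
    (hF : ∀ z, HasFDerivAt F (f' z) z) (hlip : ∀ y z, ‖f' y - f' z‖ ≤ L * ‖y - z‖)
    (x d : E) : ‖F (x + d) - F x - f' x d‖ ≤ L * ‖d‖ ^ 2 := by
  have hbound : ∀ z ∈ Metric.closedBall x ‖d‖, ‖f' z - f' x‖ ≤ L * ‖d‖ := fun z hz =>
    (hlip z x).trans (mul_le_mul_of_nonneg_left (mem_closedBall_iff_norm.mp hz) hL)
  have h := (convex_closedBall x ‖d‖).norm_image_sub_le_of_norm_hasFDerivWithin_le'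
    (fun z _ => (hF z).hasFDerivWithinAt) hbound
    (Metric.mem_closedBall_self (norm_nonneg d)) (y := x + d) (by simp)
  simpa [sq, mul_assoc] using h

theorem norm_sub_add_apply_le_of_lipschitz {L : ℝ} (hL : 0 ≤ L)
    (hF : ∀ z, HasFDerivAt F (f' z) z) (hlip : ∀ y z, ‖f' y - f' z‖ ≤ L * ‖y - z‖)
    (A : E →L[ℝ] G) (x d : E) :
    ‖F (x + d) - (F x + A d)‖ ≤ L * ‖d‖ ^ 2 + ‖A - f' x‖ * ‖d‖ := by
  calc ‖F (x + d) - (F x + A d)‖ = ‖(F (x + d) - F x - f' x d) - (A - f' x) d‖ := by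
        congr 1; rw [_root_.sub_apply]; abel
    _ ≤ ‖F (x + d) - F x - f' x d‖ + ‖(A - f' x) d‖ := norm_sub_le _ _
    _ ≤ L * ‖d‖ ^ 2 + ‖A - f' x‖ * ‖d‖ :=
        add_le_add (norm_sub_sub_apply_le_of_lipschitz hL hF hlip x d) ((A - f' x).le_opNorm d)

end Taylor

theorem abs_norm_sq_sub_norm_add_sq_le {G : Type*} [NormedAddCommGroup G]
    [InnerProductSpace ℝ G] (u v w : G) :
    |‖w‖ ^ 2 - ‖u + v‖ ^ 2| ≤ 2 * ‖u‖ * ‖w - (u + v)‖ + ‖w - u‖ ^ 2 + ‖v‖ ^ 2 := by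
  have hid : ‖w‖ ^ 2 - ‖u + v‖ ^ 2 = 2 * ⟪u, w - (u + v)⟫ + ‖w - u‖ ^ 2 - ‖v‖ ^ 2 := by
    obtain ⟨a, rfl⟩ : ∃ a, w = u + a := ⟨w - u, by abel⟩
    rw [norm_add_sq_real, norm_add_sq_real, add_sub_cancel_left, add_sub_add_left_eq_sub,
      inner_sub_right]
    ring
  have hinner := abs_real_inner_le_norm u (w - (u + v))
  rw [hid, abs_le]
  constructor <;> nlinarith [abs_le.mp hinner, sq_nonneg ‖w - u‖, sq_nonneg ‖v‖]

section LevenbergMarquardt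

variable {E G : Type*} [NormedAddCommGroup E] [InnerProductSpace ℝ E] [CompleteSpace E]
  [NormedAddCommGroup G] [InnerProductSpace ℝ G] [CompleteSpace G]
  {A : E →L[ℝ] G} {u : G} {lam : ℝ} {d : E}

open ContinuousLinearMap

theorem inner_apply_eq_of_lm_step (hstep : adjoint A (A d) + lam • d = -adjoint A u) :
    ⟪u, A d⟫ = -(‖A d‖ ^ 2 + lam * ‖d‖ ^ 2) := by
  rw [← adjoint_inner_left, ← neg_neg (adjoint A u), ← hstep, inner_neg_left, inner_add_left,
    adjoint_inner_left, real_inner_smul_left, real_inner_self_eq_norm_sq,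
    real_inner_self_eq_norm_sq]

theorem lm_predicted_reduction_eq (hstep : adjoint A (A d) + lam • d = -adjoint A u) :
    ‖u‖ ^ 2 - ‖u + A d‖ ^ 2 = ‖A d‖ ^ 2 + 2 * lam * ‖d‖ ^ 2 := by
  rw [norm_add_sq_real, inner_apply_eq_of_lm_step hstep]; ring

theorem norm_adjoint_mul_le_lm_predicted_reduction
    (hstep : adjoint A (A d) + lam • d = -adjoint A u) (hlam : 0 ≤ lam)
    (hsmall : ‖d‖ ≤ ‖adjoint A u‖ / ‖A‖ ^ 2) :
    ‖adjoint A u‖ * ‖d‖ ≤ ‖u‖ ^ 2 - ‖u + A d‖ ^ 2 := by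
  have hg : ‖adjoint A u‖ ≤ ‖A‖ * ‖A d‖ + lam * ‖d‖ := by
    rw [← norm_neg, ← hstep]
    refine (norm_add_le _ _).trans (add_le_add ?_ ?_)
    · simpa only [adjoint.norm_map] using (adjoint A).le_opNorm (A d)
    · rw [norm_smul, Real.norm_of_nonneg hlam]
  rw [lm_predicted_reduction_eq hstep]
  -- `‖A‖ ‖A d‖ ‖d‖ ≤ (‖A‖² ‖d‖² + ‖A d‖²) / 2` and `‖A‖² ‖d‖² ≤ ‖A† u‖ ‖d‖`
  nlinarith [mul_le_mul_of_nonneg_right hg (norm_nonneg d),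
    mul_le_mul_of_nonneg_right (mul_le_of_le_div₀ (norm_nonneg _) (sq_nonneg _) hsmall)
      (norm_nonneg d),
    sq_nonneg (‖A‖ * ‖d‖ - ‖A d‖)]

end LevenbergMarquardt

theorem abs_div_sub_one_le_of_reduction_bounds {a p θ g δ κlj κlf κbf κbmj κej : ℝ}
    (hθ : 0 < θ) (hg : 0 < g) (hδ : 0 < δ) (hκbf : 0 ≤ κbf) (hκlj : 0 ≤ κlj) (hκej : 0 ≤ κej)
    (hp₁ : 2 * (θ * g) * δ ^ 2 ≤ p) (hp₂ : g * δ ≤ p)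
    (h : |a - p| ≤ 2 * κbf * (κlj * δ ^ 2 + κej / θ * δ) + (κlf ^ 2 + κbmj ^ 2) * δ ^ 2) :
    |a / p - 1| ≤ (κlj * κbf + κlf ^ 2 + 2 * κbf * κej + κbmj ^ 2) / (θ * g) := by
  have hp : 0 < p := (mul_pos hg hδ).trans_le hp₂
  rw [div_sub_one hp.ne', abs_div, abs_of_pos hp, div_le_div_iff₀ hp (mul_pos hθ hg)]
  have hκej_mul : κej / θ * δ * (θ * g) = κej * (g * δ) := by field_simp
  nlinarith [mul_le_mul_of_nonneg_right h (mul_pos hθ hg).le,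
    mul_le_mul_of_nonneg_left hp₁ (mul_nonneg hκbf hκlj),
    mul_le_mul_of_nonneg_left hp₂ (mul_nonneg hκbf hκej),
    mul_le_mul_of_nonneg_left hp₁ (add_nonneg (sq_nonneg κlf) (sq_nonneg κbmj)),
    mul_nonneg (add_nonneg (sq_nonneg κlf) (sq_nonneg κbmj)) hp.le]

open ContinuousLinearMap in
theorem abs_lm_ratio_sub_one_le {E G : Type*} [NormedAddCommGroup E] [InnerProductSpace ℝ E]
    [CompleteSpace E] [NormedAddCommGroup G] [InnerProductSpace ℝ G] [CompleteSpace G]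
    {F : E → G} {f' : E → E →L[ℝ] G} {κlj κlf κbf θ κbmj κej : ℝ} {x d : E} {A : E →L[ℝ] G}
    (hF : ∀ z, HasFDerivAt F (f' z) z) (hlip : ∀ y z, ‖f' y - f' z‖ ≤ κlj * ‖y - z‖)
    (hf' : ∀ y, ‖f' y‖ ≤ κlf) (hFx : ‖F x‖ ≤ κbf) (hθ : 0 < θ)
    (hA : ‖A‖ ≤ κbmj) (hAx : ‖A - f' x‖ ≤ κej / θ) (hg : adjoint A (F x) ≠ 0)
    (hstep : adjoint A (A d) + (θ * ‖adjoint A (F x)‖) • d = -adjoint A (F x))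
    (hsmall : ‖d‖ ≤ ‖adjoint A (F x)‖ / ‖A‖ ^ 2) :
    |(‖F x‖ ^ 2 - ‖F (x + d)‖ ^ 2) / (‖F x‖ ^ 2 - ‖F x + A d‖ ^ 2) - 1| ≤
      (κlj * κbf + κlf ^ 2 + 2 * κbf * κej + κbmj ^ 2) / (θ * ‖adjoint A (F x)‖) := by
  have hgpos : 0 < ‖adjoint A (F x)‖ := norm_pos_iff.mpr hg
  have hd : 0 < ‖d‖ := norm_pos_iff.mpr fun h => hg (by simpa [h] using hstep.symm)
  have hκlj : 0 ≤ κlj := by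
    have := (norm_nonneg _).trans (hlip (x + d) x)
    rw [add_sub_cancel_left] at this
    exact nonneg_of_mul_nonneg_left this hd
  have hκbf : 0 ≤ κbf := (norm_nonneg _).trans hFx
  have hκej : 0 ≤ κej := by
    have := (norm_nonneg _).trans hAx
    rwa [le_div_iff₀ hθ, zero_mul] at this
  have hmodel : ‖F (x + d) - (F x + A d)‖ ≤ κlj * ‖d‖ ^ 2 + κej / θ * ‖d‖ :=
    (norm_sub_add_apply_le_of_lipschitz hκlj hF hlip A x d).trans (by gcongr)
  have hmv : ‖F (x + d) - F x‖ ≤ κlf * ‖d‖ := by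
    simpa using norm_sub_le_of_forall_norm_hasFDerivAt_le hF hf' x (x + d)
  have hAd : ‖A d‖ ≤ κbmj * ‖d‖ := (A.le_opNorm d).trans (by gcongr)
  have hpred := lm_predicted_reduction_eq hstep
  refine abs_div_sub_one_le_of_reduction_bounds hθ hgpos hd hκbf hκlj hκej
    (by rw [hpred]; nlinarith [sq_nonneg ‖A d‖])
    (norm_adjoint_mul_le_lm_predicted_reduction hstep (by positivity) hsmall) ?_
  calc |(‖F x‖ ^ 2 - ‖F (x + d)‖ ^ 2) - (‖F x‖ ^ 2 - ‖F x + A d‖ ^ 2)|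
      = |‖F (x + d)‖ ^ 2 - ‖F x + A d‖ ^ 2| := by rw [← abs_neg]; ring_nf
    _ ≤ 2 * ‖F x‖ * ‖F (x + d) - (F x + A d)‖ + ‖F (x + d) - F x‖ ^ 2 + ‖A d‖ ^ 2 :=
        abs_norm_sq_sub_norm_add_sq_le _ _ _
    _ ≤ 2 * κbf * (κlj * ‖d‖ ^ 2 + κej / θ * ‖d‖) + (κlf * ‖d‖) ^ 2 + (κbmj * ‖d‖) ^ 2 := by
        gcongr
    _ = 2 * κbf * (κlj * ‖d‖ ^ 2 + κej / θ * ‖d‖) + (κlf ^ 2 + κbmj ^ 2) * ‖d‖ ^ 2 := by ring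

section MatrixBridge

variable {p n q : ℕ}

theorem mulVecE_eq_jacCLM_apply (A : Matrix (Fin p) (Fin n) ℝ) (x : EuclideanSpace ℝ (Fin n)) :
    mulVecE A x = jacCLM A x := rfl

theorem opNorm_eq_norm_jacCLM (A : Matrix (Fin p) (Fin n) ℝ) : opNorm A = ‖jacCLM A‖ := by
  rw [opNorm, ← ContinuousLinearMap.sSup_unitClosedBall_eq_norm]
  congr 1
  ext r
  simp only [Set.mem_ofPred_eq, Set.mem_image, Metric.mem_closedBall, dist_zero_right,
    mulVecE_eq_jacCLM_apply, eq_comm]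

theorem jacCLM_sub (A B : Matrix (Fin p) (Fin n) ℝ) : jacCLM (A - B) = jacCLM A - jacCLM B := by
  ext x
  simp [jacCLM]

theorem jacCLM_mul (A : Matrix (Fin p) (Fin n) ℝ) (B : Matrix (Fin n) (Fin q) ℝ) :
    jacCLM (A * B) = (jacCLM A).comp (jacCLM B) := by
  ext x
  simp [jacCLM, Matrix.mulVec_mulVec]

theorem jacCLM_transpose (A : Matrix (Fin p) (Fin n) ℝ) :
    jacCLM Aᵀ = ContinuousLinearMap.adjoint (jacCLM A) := by
  rw [jacCLM, ← Matrix.conjTranspose_eq_transpose_of_trivial,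
    Matrix.toEuclideanLin_conjTranspose_eq_adjoint, LinearMap.adjoint_toContinuousLinearMap]
  rfl

theorem opNorm_transpose_mul_self (A : Matrix (Fin p) (Fin n) ℝ) :
    opNorm (Aᵀ * A) = ‖jacCLM A‖ ^ 2 := by
  rw [opNorm_eq_norm_jacCLM, jacCLM_mul, jacCLM_transpose,
    ContinuousLinearMap.norm_adjoint_comp_self, sq]

theorem adjoint_jacCLM_lm_step {A : Matrix (Fin p) (Fin n) ℝ} {u : EuclideanSpace ℝ (Fin p)}
    {lam : ℝ} {d : EuclideanSpace ℝ (Fin n)}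
    (h : (Aᵀ * A + lam • (1 : Matrix (Fin n) (Fin n) ℝ)).mulVec d = -(Aᵀ.mulVec u)) :
    ContinuousLinearMap.adjoint (jacCLM A) (jacCLM A d) + lam • d =
      -ContinuousLinearMap.adjoint (jacCLM A) u := by
  rw [← jacCLM_transpose, ← ContinuousLinearMap.comp_apply, ← jacCLM_mul]
  ext i
  simpa [jacCLM, Matrix.add_mulVec, Matrix.smul_mulVec] using congrFun h i

end MatrixBridge

/-- Bound on `|ρ − 1|`, where `ρ` is the ratio of the actual reduction to the
predicted reduction along the LM step `d`. -/
theorem ratio_minus_one_bound {n m : ℕ}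
    (F : EuclideanSpace ℝ (Fin n) → EuclideanSpace ℝ (Fin m))
    (J : EuclideanSpace ℝ (Fin n) → Matrix (Fin m) (Fin n) ℝ)
    (hF : ∀ z, HasFDerivAt F (jacCLM (J z)) z)
    (κlj κlf κbf : ℝ)
    (hJlip : ∀ y z, opNorm (J y - J z) ≤ κlj * ‖y - z‖)
    (hJb : ∀ y, opNorm (J y) ≤ κlf)
    (hFb : ∀ y, ‖F y‖ ≤ κbf)
    (x : EuclideanSpace ℝ (Fin n)) (θ : ℝ) (hθ : 0 < θ)
    (Jm : Matrix (Fin m) (Fin n) ℝ) (κbmj κej : ℝ)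
    (hJmb : opNorm Jm ≤ κbmj)
    (hJmacc : opNorm (Jm - J x) ≤ κej / θ)
    (hJmF : mulVecE Jmᵀ (F x) ≠ 0)
    (d : EuclideanSpace ℝ (Fin n))
    (hd : (Jmᵀ * Jm + (θ * ‖mulVecE Jmᵀ (F x)‖) •
        (1 : Matrix (Fin n) (Fin n) ℝ)).mulVec d = -(Jmᵀ.mulVec (F x)))
    (hdsmall : ‖d‖ ≤ ‖mulVecE Jmᵀ (F x)‖ / opNorm (Jmᵀ * Jm))
    (ρ : ℝ)
    (hρ : ρ = (‖F x‖ ^ 2 - ‖F (x + d)‖ ^ 2) /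
      (‖F x‖ ^ 2 - ‖F x + mulVecE Jm d‖ ^ 2)) :
    |ρ - 1| ≤ (κlj * κbf + κlf ^ 2 + 2 * κbf * κej + κbmj ^ 2) /
      (θ * ‖mulVecE Jmᵀ (F x)‖) := by
  rw [opNorm_transpose_mul_self] at hdsmall
  simp only [opNorm_eq_norm_jacCLM, jacCLM_sub, mulVecE_eq_jacCLM_apply, jacCLM_transpose]
    at hJlip hJb hJmb hJmacc hJmF hdsmall hd hρ ⊢
  rw [hρ]
  exact abs_lm_ratio_sub_one_le hF hJlip hJb (hFb x) hθ hJmb hJmacc hJmF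
    (adjoint_jacCLM_lm_step hd) hdsmall
end
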